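/- Let f_W(x) = W^L ρ(W^{L-1} ⋯ ρ(W^1 x) ⋯) be an L-layer neural network with 1-Lipschitz activation ρ, and let f_Ŵ denote the network with all weight matrices replaced by Ŵ^m ∈ B_{W^m}(ε_m), m ∈ [L]. Then for any x̂ ∈ B_x(ε_x) and every pair of output classes i, j, the input-perturbation part of the margin error of the perturbed network satisfies f^{ij}_{Ŵ}(x̂) − f^{ij}_{Ŵ}(x) ≤ ε_x (‖W^L_{i,:} − W^L_{j,:}‖_1 + 2 d_L ε_L) ∏_{m=1}^{L−1} (‖W^m‖_∞ + d_m ε_m) = τ^{ij}_W(ξ), where d_m denotes the number of columns of W^m. -/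

import Mathlib

/-- Vector ℓ1 norm: `‖v‖₁ = Σ_q |v_q|`. -/
noncomputable def vecL1 {n : ℕ} (v : Fin n → ℝ) : ℝ := ∑ q, |v q|

/-- Vector ℓ∞ norm: `‖v‖_∞ = max_q |v_q|`. -/
noncomputable def vecLinf {n : ℕ} (v : Fin n → ℝ) : ℝ := ⨆ q, |v q|

/-- Matrix ℓ∞→ℓ∞ operator norm: `‖W‖_∞ = max_p Σ_q |W_{p,q}|`. -/
noncomputable def matLinf {m n : ℕ} (W : Matrix (Fin m) (Fin n) ℝ) : ℝ := ⨆ p, ∑ q, |W p q|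

/-- Matrix ℓ1→ℓ1 operator norm: `‖W‖₁ = max_q Σ_p |W_{p,q}|`. -/
noncomputable def matL1 {m n : ℕ} (W : Matrix (Fin m) (Fin n) ℝ) : ℝ := ⨆ q, ∑ p, |W p q|

/-- `zLayer d ρ W k x` is the `k`-th zLayer-layer output
`z^k_W(x) = ρ(W^k ⋯ ρ(W^1 x) ⋯)`, with `z^0_W(x) = x`.
Here `W k` denotes the paper's weight matrix `W^{k+1}`
(so `W : ∀ k, Matrix (Fin (d (k+1))) (Fin (d k)) ℝ` lists `W^1, W^2, …`). -/
noncomputable def zLayer (d : ℕ → ℕ) (ρ : ℝ → ℝ)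
    (W : ∀ k, Matrix (Fin (d (k + 1))) (Fin (d k)) ℝ) :
    (k : ℕ) → (Fin (d 0) → ℝ) → Fin (d k) → ℝ
  | 0, x => x
  | k + 1, x => fun p => ρ ((W k).mulVec (zLayer d ρ W k x) p)

/-- `nnet d ρ W k x = (W^{k+1}) z^k_W(x)` is the output of the `(k+1)`-layer network
`f_W(x) = W^{k+1} ρ(W^k ⋯ ρ(W^1 x) ⋯)`.  In particular `nnet d ρ W (L-1)` is the
paper's `L`-layer network. -/
noncomputable def nnet (d : ℕ → ℕ) (ρ : ℝ → ℝ)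
    (W : ∀ k, Matrix (Fin (d (k + 1))) (Fin (d k)) ℝ) (k : ℕ)
    (x : Fin (d 0) → ℝ) : Fin (d (k + 1)) → ℝ :=
  (W k).mulVec (zLayer d ρ W k x)

/- Each layer is Lipschitz for the ℓ∞ norm with constant `‖Ŵ^m‖_∞ ≤ ‖W^m‖_∞ + d_m ε_m`, since `ρ`
is 1-Lipschitz and a row of `Ŵ^m` has ℓ1 norm at most that of the row of `W^m` plus `d_m ε_m`.
Hence the hidden representations of `x̂` and `x` differ by at most `ε_x ∏_{m=1}^{L-1} (‖W^m‖_∞ + d_m ε_m)`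
in every coordinate, and the margin difference is the dot product of this gap with
`Ŵ^L_{i,:} − Ŵ^L_{j,:}`, whose ℓ1 norm is at most `‖W^L_{i,:} − W^L_{j,:}‖_1 + 2 d_L ε_L`. -/

section Norms

variable {m n : ℕ}

lemma matLinf_nonneg (W : Matrix (Fin m) (Fin n) ℝ) : 0 ≤ matLinf W :=
  Real.iSup_nonneg fun _ => Finset.sum_nonneg fun _ _ => abs_nonneg _

lemma vecL1_row_le_matLinf (W : Matrix (Fin m) (Fin n) ℝ) (p : Fin m) :
    vecL1 (W p) ≤ matLinf W :=
  le_ciSup (Set.finite_range fun p => ∑ q, |W p q|).bddAbove p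

lemma vecL1_le_add_of_abs_sub_le {a a' : Fin n → ℝ} {e : ℝ} (h : ∀ q, |a' q - a q| ≤ e) :
    vecL1 a' ≤ vecL1 a + n * e := by
  calc vecL1 a' ≤ ∑ q, (|a q| + e) :=
        Finset.sum_le_sum fun q _ => by linarith [abs_sub_abs_le_abs_sub (a' q) (a q), h q]
    _ = vecL1 a + n * e := by simp [vecL1, Finset.sum_add_distrib]

lemma abs_dotProduct_le_vecL1_mul {a u : Fin n → ℝ} {c : ℝ} (hu : ∀ q, |u q| ≤ c) :
    |a ⬝ᵥ u| ≤ vecL1 a * c := by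
  calc |a ⬝ᵥ u| ≤ ∑ q, |a q| * |u q| := by
        simpa only [dotProduct, abs_mul] using Finset.abs_sum_le_sum_abs (fun q => a q * u q) _
    _ ≤ ∑ q, |a q| * c := Finset.sum_le_sum fun q _ => by gcongr; exact hu q
    _ = vecL1 a * c := by rw [vecL1, Finset.sum_mul]

end Norms

section Network

variable (d : ℕ → ℕ) (ρ : ℝ → ℝ) (W What : ∀ k, Matrix (Fin (d (k + 1))) (Fin (d k)) ℝ)
  (ε : ℕ → ℝ) (εx : ℝ) (x xhat : Fin (d 0) → ℝ)

lemma prod_matLinf_add_nonneg (hε : ∀ k, 0 ≤ ε k) (k : ℕ) :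
    0 ≤ ∏ m ∈ Finset.range k, (matLinf (W m) + d m * ε m) :=
  Finset.prod_nonneg fun m _ => add_nonneg (matLinf_nonneg _) (mul_nonneg (Nat.cast_nonneg _) (hε m))

lemma abs_zLayer_sub_le (hρ_lip : ∀ s t, |ρ s - ρ t| ≤ |s - t|)
    (hε : ∀ k, 0 ≤ ε k) (hεx : 0 ≤ εx) (hx : ∀ q, |xhat q - x q| ≤ εx) (k : ℕ)
    (hW : ∀ m, m < k → ∀ p q, |What m p q - W m p q| ≤ ε m) (p : Fin (d k)) :
    |zLayer d ρ What k xhat p - zLayer d ρ What k x p| ≤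
      εx * ∏ m ∈ Finset.range k, (matLinf (W m) + d m * ε m) := by
  induction k with
  | zero => simpa [zLayer] using hx p
  | succ k ih =>
    set C := εx * ∏ m ∈ Finset.range k, (matLinf (W m) + d m * ε m)
    have hC : 0 ≤ C := mul_nonneg hεx (prod_matLinf_add_nonneg d W ε hε k)
    have hgap (q) := ih (fun m hm => hW m (Nat.lt_succ_of_lt hm)) q
    have hrow : vecL1 (What k p) ≤ matLinf (W k) + d k * ε k :=
      (vecL1_le_add_of_abs_sub_le (hW k k.lt_succ_self p)).trans
        (by gcongr; exact vecL1_row_le_matLinf _ _)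
    calc |zLayer d ρ What (k + 1) xhat p - zLayer d ρ What (k + 1) x p|
        ≤ |What k p ⬝ᵥ (zLayer d ρ What k xhat - zLayer d ρ What k x)| := by
          rw [dotProduct_sub]; exact hρ_lip _ _
      _ ≤ vecL1 (What k p) * C := abs_dotProduct_le_vecL1_mul hgap
      _ ≤ (matLinf (W k) + d k * ε k) * C := by gcongr
      _ = εx * ∏ m ∈ Finset.range (k + 1), (matLinf (W m) + d m * ε m) := by
          rw [Finset.prod_range_succ]; ring

lemma nnet_margin_sub (k : ℕ) (i j : Fin (d (k + 1))) :
    (nnet d ρ W k xhat i - nnet d ρ W k xhat j) - (nnet d ρ W k x i - nnet d ρ W k x j) =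
      (W k i - W k j) ⬝ᵥ (zLayer d ρ W k xhat - zLayer d ρ W k x) := by
  simp only [nnet, Matrix.mulVec, dotProduct_sub, sub_dotProduct]

end Network

/- `W k` and `ε k` are the paper's `W^{k+1}` and `ε_{k+1}`, so the paper's `d_m` is `d (m - 1)`. -/
/-- for the all-layer-perturbed network `f_Ŵ` (with
`Ŵ^m ∈ B_{W^m}(ε_m)` for all `m ∈ [L]`) and any `x̂ ∈ B_x(ε_x)`, the
input-perturbation part of the margin error satisfies
`f^{ij}_{Ŵ}(x̂) − f^{ij}_{Ŵ}(x) ≤ ε_x (‖W^L_{i,:} − W^L_{j,:}‖_1 + 2 d_L ε_L)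
  ∏_{m=1}^{L−1} (‖W^m‖_∞ + d_m ε_m) = τ^{ij}_W(ξ)`.
(`W k` is the paper's `W^{k+1}` and `ε k` the paper's `ε_{k+1}`; `d_m`, the number of
columns of the paper's `W^m`, is `d (m-1)`; `∏_{m=1}^{L-1} ↦ Finset.range (L-1)`.) -/
theorem statement14 (d : ℕ → ℕ) (ρ : ℝ → ℝ)
    (hρ_lip : ∀ s t, |ρ s - ρ t| ≤ |s - t|)
    (L : ℕ) (hL : 1 ≤ L)
    (W What : ∀ k, Matrix (Fin (d (k + 1))) (Fin (d k)) ℝ)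
    (ε : ℕ → ℝ) (εx : ℝ) (hε : ∀ k, 0 ≤ ε k) (hεx : 0 ≤ εx)
    (hW : ∀ k, k < L → ∀ p q, |What k p q - W k p q| ≤ ε k)
    (x xhat : Fin (d 0) → ℝ) (hx : ∀ q, |xhat q - x q| ≤ εx)
    (i j : Fin (d (L - 1 + 1))) :
    (nnet d ρ What (L - 1) xhat i - nnet d ρ What (L - 1) xhat j) -
        (nnet d ρ What (L - 1) x i - nnet d ρ What (L - 1) x j) ≤
      εx * (vecL1 (fun q => W (L - 1) i q - W (L - 1) j q) +
              2 * (d (L - 1) : ℝ) * ε (L - 1)) *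
        ∏ m ∈ Finset.range (L - 1), (matLinf (W m) + (d m : ℝ) * ε m) := by
  have hlast : L - 1 < L := Nat.sub_one_lt_of_le hL le_rfl
  have hgap := abs_zLayer_sub_le d ρ W What ε εx x xhat hρ_lip hε hεx hx (L - 1)
    (fun m hm => hW m (hm.trans hlast))
  have hrow : vecL1 (What (L - 1) i - What (L - 1) j) ≤
      vecL1 (fun q => W (L - 1) i q - W (L - 1) j q) + d (L - 1) * (2 * ε (L - 1)) :=
    vecL1_le_add_of_abs_sub_le fun q => by
      calc _ = |(What (L - 1) i q - W (L - 1) i q) - (What (L - 1) j q - W (L - 1) j q)| := by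
            simp only [Pi.sub_apply]; ring_nf
        _ ≤ 2 * ε (L - 1) := (abs_sub _ _).trans (by linarith [hW _ hlast i q, hW _ hlast j q])
  rw [nnet_margin_sub]
  calc _ ≤ |(What (L - 1) i - What (L - 1) j) ⬝ᵥ
          (zLayer d ρ What (L - 1) xhat - zLayer d ρ What (L - 1) x)| := le_abs_self _
    _ ≤ vecL1 (What (L - 1) i - What (L - 1) j) *
          (εx * ∏ m ∈ Finset.range (L - 1), (matLinf (W m) + d m * ε m)) :=
        abs_dotProduct_le_vecL1_mul hgap
    _ ≤ _ := by
        have := mul_le_mul_of_nonneg_right hrow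
          (mul_nonneg hεx (prod_matLinf_add_nonneg d W ε hε (L - 1)))
        linarith
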